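/- Let T, D ∈ ℕ and K, B, M > 0. For t = 0, …, T−1 let q^t : ℝ^{t+1} → ℝ be polynomials of degree at most D with all coefficients bounded in absolute value by K, and let b̄_{t,j} ∈ ℝ (1 ≤ j ≤ t ≤ T−1) satisfy |b̄_{t,j}| ≤ B. For each n let u⁰ ∈ ℝⁿ with ‖u⁰‖_∞ ≤ M, and for any symmetric n×n real matrix X with zero diagonal define iterates u^{t+1} = X q^t(u⁰, …, u^t) − Σ_{j=1}^{t} b̄_{t,j} q^{j−1}(u⁰, …, u^{j−1}), where the functions q^t are applied coordinatewise. Then there exist constants Δ = Δ(T, D) and c = c(T, D, K, B, M), independent of n, and for each n, t ≤ T, i ≤ n an LDP w_i^t in dimension n such that: (1) u_i^t = w_i^t(X) for every such matrix X; (2) w_i^t has total degree at most Δ and ‖w_i^t‖ ≤ c; (3) every monomial of w_i^t with nonzero coefficient is connected and contains node i. -/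

import Mathlib

open MeasureTheory ProbabilityTheory Filter
open scoped ENNReal NNReal

noncomputable section

/-- Index type of the variables `x_{ij}`, `1 ≤ i < j ≤ n`. -/
abbrev Edge (n : ℕ) : Type := {e : Fin n × Fin n // e.1 < e.2}

/-- A (low-degree) polynomial in the variables `x_{ij}`, `1 ≤ i < j ≤ n`. -/
abbrev LDP (n : ℕ) : Type := MvPolynomial (Edge n) ℝ

/-- `‖p‖ = max_α |c_{p,α}|`. -/
def LDPnorm {n : ℕ} (p : LDP n) : ℝ :=
  ⨆ α : Edge n →₀ ℕ, |MvPolynomial.coeff α p|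

/-- Evaluation of an LDP at the entries `(M i j)_{i<j}` of a matrix. -/
def evalMat {n : ℕ} (p : LDP n) (M : Matrix (Fin n) (Fin n) ℝ) : ℝ :=
  MvPolynomial.eval (fun e : Edge n => M e.val.1 e.val.2) p

/-- The vertex set `V_α` of the factor graph of an exponent `α`. -/
def vertexSet {n : ℕ} (α : Edge n →₀ ℕ) : Set (Fin n) :=
  {k | ∃ e : Edge n, α e ≠ 0 ∧ (e.val.1 = k ∨ e.val.2 = k)}

/-- The factor graph `G_α`. -/
def graphOf {n : ℕ} (α : Edge n →₀ ℕ) : SimpleGraph (Fin n) where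
  Adj i j := (∃ h : i < j, α ⟨(i, j), h⟩ ≠ 0) ∨ (∃ h : j < i, α ⟨(j, i), h⟩ ≠ 0)
  symm := by constructor; intro i j h; exact h.symm
  loopless := by constructor; intro i h; rcases h with ⟨h, _⟩ | ⟨h, _⟩ <;> exact absurd h (lt_irrefl i)

/-- `x^α` is connected: all vertices of `V_α` are mutually reachable in `G_α`
(vacuously true for the constant monomial). -/
def ConnectedExp {n : ℕ} (α : Edge n →₀ ℕ) : Prop :=
  ∀ u ∈ vertexSet α, ∀ v ∈ vertexSet α, (graphOf α).Reachable u v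

/-- `G_α` is a tree. -/
def IsTreeExp {n : ℕ} (α : Edge n →₀ ℕ) : Prop :=
  ConnectedExp α ∧ (graphOf α).IsAcyclic

/-- every entry of `α` is at most 2. -/
def MaxTwo {n : ℕ} (α : Edge n →₀ ℕ) : Prop := ∀ e : Edge n, α e ≤ 2

/-- `G_α` a tree and all entries of `α` at most `2`. -/
def IsTree2 {n : ℕ} (α : Edge n →₀ ℕ) : Prop := IsTreeExp α ∧ MaxTwo α

/-- `‖α‖₁`. -/
def expDeg {n : ℕ} (α : Edge n →₀ ℕ) : ℕ := α.sum fun _ k => k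

/-- `p ∈ T_{n,2,Δ}`. -/
def MemT2 {n : ℕ} (Δ : ℕ) (p : LDP n) : Prop :=
  ∀ α : Edge n →₀ ℕ, MvPolynomial.coeff α p ≠ 0 → IsTree2 α ∧ expDeg α ≤ Δ

/-- `p` is a connected LDP. -/
def ConnectedLDP {n : ℕ} (p : LDP n) : Prop :=
  ∀ α : Edge n →₀ ℕ, MvPolynomial.coeff α p ≠ 0 → ConnectedExp α

/-- `p` contains node `i` (the constant monomial contains every node). -/
def ContainsNode {n : ℕ} (i : Fin n) (p : LDP n) : Prop :=
  ∀ α : Edge n →₀ ℕ, MvPolynomial.coeff α p ≠ 0 → α = 0 ∨ i ∈ vertexSet α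

/-- `S ⊆ p` (the constant monomial contains every node). -/
def ContainsSet {n : ℕ} (S : Finset (Fin n)) (p : LDP n) : Prop :=
  ∀ α : Edge n →₀ ℕ, MvPolynomial.coeff α p ≠ 0 → α = 0 ∨ (S : Set (Fin n)) ⊆ vertexSet α

open scoped Classical in
/-- The tree projection `p^Tr`. -/
def treeProj {n : ℕ} (p : LDP n) : LDP n :=
  ∑ α ∈ p.support, if IsTree2 α then MvPolynomial.monomial α (MvPolynomial.coeff α p) else 0

instance matrixMeasurableSpace {m n α : Type*} [MeasurableSpace α] :
    MeasurableSpace (Matrix m n α) :=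
  inferInstanceAs (MeasurableSpace (m → n → α))

/-- Build a symmetric zero-diagonal matrix out of upper-triangular entries. -/
def symmetrize {n : ℕ} (g : Edge n → ℝ) : Matrix (Fin n) (Fin n) ℝ :=
  Matrix.of fun i j =>
    if h : i < j then g ⟨(i, j), h⟩ else if h' : j < i then g ⟨(j, i), h'⟩ else 0

/-- The GOE(n) distribution, as a measure on symmetric zero-diagonal matrices:
i.i.d. `N(0, 1/n)` entries above the diagonal. -/
def GOEMeasure (n : ℕ) : Measure (Matrix (Fin n) (Fin n) ℝ) :=
  (Measure.pi fun _ : Edge n => gaussianReal 0 (n : ℝ≥0)⁻¹).map symmetrize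

/-- The law of `-(B - d/n)/√(d(1-d/n))`, `B ∼ Bernoulli(d/n)`. -/
def hatGEntry (n : ℕ) (d : ℝ) : Measure ℝ :=
  (Real.toNNReal (1 - d / n)) • Measure.dirac ((d / n) / Real.sqrt (d * (1 - d / n)))
    + (Real.toNNReal (d / n)) • Measure.dirac (-(1 - d / n) / Real.sqrt (d * (1 - d / n)))

instance hatGEntry.isFiniteMeasure (n : ℕ) (d : ℝ) : IsFiniteMeasure (hatGEntry n d) := by
  unfold hatGEntry; infer_instance

/-- The distribution `Ĝ(n, d/n)` of the centered rescaled adjacency matrix. -/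
def hatGMeasure (n : ℕ) (d : ℝ) : Measure (Matrix (Fin n) (Fin n) ℝ) :=
  (Measure.pi fun _ : Edge n => hatGEntry n d).map symmetrize

/-- `p(M) = (p_1(M),…,p_n(M))`. -/
def pEval {n : ℕ} (p : Fin n → LDP n) (M : Matrix (Fin n) (Fin n) ℝ) : Fin n → ℝ :=
  fun i => evalMat (p i) M

/-- `vᵀ M v`. -/
def quadForm {n : ℕ} (M : Matrix (Fin n) (Fin n) ℝ) (v : Fin n → ℝ) : ℝ :=
  dotProduct v (M.mulVec v)

/-- Euclidean distance from `z` to the cube `[-1,1]ⁿ`. -/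
def cubeDist {n : ℕ} (z : Fin n → ℝ) : ℝ :=
  Real.sqrt (∑ i, max (|z i| - 1) 0 ^ 2)

/-- The logistic function `φ`. -/
def logistic (z : ℝ) : ℝ := Real.exp z / (1 + Real.exp z)

/-- The smooth approximation `π_a` of the distance to `[-1,1]`. -/
def pia (a z : ℝ) : ℝ :=
  (Real.log (1 + Real.exp (a * (z - 1))) + Real.log (1 + Real.exp (a * (-z - 1)))) / a

end

/-!
The iterate `u_i^t` is the value at `X` of an LDP `w_i^t` obeying the same recursion, with the
entry `X_{ik}` replaced by the variable `x_{ik}` (and by `0` when `i = k`).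

Exponents that are connected and contain node `i` form an additive submonoid, so the polynomials
supported on them form a subalgebra. A polynomial of this kind for node `k`, multiplied by
`x_{ik}`, becomes one for node `i`; this is the only operation in the recursion that changes node.

Degrees obey `Δ_{t+1} = D Δ_t + 1`. A coefficient of `p q` is a sum over the at most
`2 ^ (deg p + deg q)` splittings of its exponent, so substituting polynomials of degree `≤ Δ` and
coefficients `≤ c` into `q^t` gives coefficients bounded in terms of `D, K, Δ, c` alone. The
only place where `n` could enter is `∑ k, x_{ik} Q_k`: a monomial `α` receives a contribution
only from those `k` with `x_{ik}` in `α`, and there are at most `deg α` of them.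
-/

noncomputable section

open Finset MvPolynomial

section CoefficientBounds

variable {σ : Type*}

lemma card_antidiagonal_le_two_pow [DecidableEq σ] (α : σ →₀ ℕ) :
    #(antidiagonal α) ≤ 2 ^ α.degree := by
  calc #(antidiagonal α) ≤ Multiset.card ((Finsupp.toMultiset α).antidiagonal.map
        (Prod.map Multiset.toFinsupp Multiset.toFinsupp)) := Multiset.toFinset_card_le _
    _ = 2 ^ α.degree := by
        rw [Multiset.card_map, Multiset.card_antidiagonal, Finsupp.card_toMultiset]; rfl

lemma card_support_le_of_totalDegree_le [Fintype σ] {p : MvPolynomial σ ℝ} {D : ℕ}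
    (hp : p.totalDegree ≤ D) : #p.support ≤ (D + 1) ^ Fintype.card σ := by
  classical
  calc #p.support ≤ #(Fintype.piFinset fun _ : σ => range (D + 1)) := by
        refine card_le_card_of_injOn (fun m i => m i) (fun m hm => ?_)
          DFunLike.coe_injective.injOn
        simp only [mem_coe, Fintype.mem_piFinset, mem_range, Nat.lt_succ_iff]
        exact fun i => (Finsupp.le_degree i m).trans ((le_totalDegree hm).trans hp)
    _ = (D + 1) ^ Fintype.card σ := by simp

def CoeffBound (c : ℝ) (p : MvPolynomial σ ℝ) : Prop := ∀ α, |coeff α p| ≤ c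

namespace CoeffBound

variable {c c₁ c₂ : ℝ} {p q : MvPolynomial σ ℝ}

lemma nonneg (h : CoeffBound c p) : 0 ≤ c := (abs_nonneg _).trans (h 0)

lemma mono (h : CoeffBound c p) (hc : c ≤ c₁) : CoeffBound c₁ p := fun α => (h α).trans hc

protected lemma C (a : ℝ) : CoeffBound |a| (C a : MvPolynomial σ ℝ) := by
  classical
  intro α
  rw [coeff_C]
  split_ifs <;> simp

lemma one : CoeffBound 1 (1 : MvPolynomial σ ℝ) := by simpa using CoeffBound.C (σ := σ) 1

lemma C_mul {a b : ℝ} (ha : |a| ≤ b) (h : CoeffBound c p) : CoeffBound (b * c) (C a * p) := by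
  intro α
  rw [coeff_C_mul, abs_mul]
  exact mul_le_mul ha (h α) (abs_nonneg _) ((abs_nonneg a).trans ha)

lemma sub (h₁ : CoeffBound c₁ p) (h₂ : CoeffBound c₂ q) :
    CoeffBound (c₁ + c₂) (p - q) := by
  intro α
  rw [coeff_sub]
  exact (abs_sub _ _).trans (add_le_add (h₁ α) (h₂ α))

lemma sum {ι : Type*} {s : Finset ι} {f : ι → MvPolynomial σ ℝ}
    (h : ∀ i ∈ s, CoeffBound c (f i)) : CoeffBound (#s * c) (∑ i ∈ s, f i) := by
  intro α
  rw [coeff_sum]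
  calc |∑ i ∈ s, coeff α (f i)| ≤ ∑ i ∈ s, |coeff α (f i)| := abs_sum_le_sum_abs _ _
    _ ≤ #s * c := by simpa using sum_le_card_nsmul s _ c fun i hi => h i hi α

lemma LDPnorm_le {n : ℕ} {p : LDP n} (h : CoeffBound c p) : LDPnorm p ≤ c :=
  Real.iSup_le h h.nonneg

lemma mul (h₁ : CoeffBound c₁ p) (h₂ : CoeffBound c₂ q) :
    CoeffBound (2 ^ (p.totalDegree + q.totalDegree) * (c₁ * c₂)) (p * q) := by
  classical
  intro α
  have hc : 0 ≤ c₁ * c₂ := mul_nonneg h₁.nonneg h₂.nonneg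
  by_cases hα : α.degree ≤ p.totalDegree + q.totalDegree
  · rw [coeff_mul]
    calc |∑ x ∈ antidiagonal α, coeff x.1 p * coeff x.2 q|
        ≤ ∑ x ∈ antidiagonal α, |coeff x.1 p * coeff x.2 q| := abs_sum_le_sum_abs _ _
      _ ≤ #(antidiagonal α) * (c₁ * c₂) := by
          simpa [abs_mul] using sum_le_card_nsmul _ _ _ fun x _ =>
            mul_le_mul (h₁ x.1) (h₂ x.2) (abs_nonneg _) h₁.nonneg
      _ ≤ 2 ^ α.degree * (c₁ * c₂) := by
          gcongr; exact_mod_cast card_antidiagonal_le_two_pow α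
      _ ≤ _ := by gcongr; norm_num
  · rw [coeff_eq_zero_of_totalDegree_lt ((totalDegree_mul p q).trans_lt (not_le.1 hα)), abs_zero]
    positivity

lemma multiset_prod {s : Multiset (MvPolynomial σ ℝ)} {δ : ℕ} {L : ℝ}
    (hdeg : ∀ f ∈ s, f.totalDegree ≤ δ) (hL : ∀ f ∈ s, CoeffBound L f) :
    s.prod.totalDegree ≤ δ * Multiset.card s ∧
      CoeffBound ((2 ^ (δ * Multiset.card s) * L) ^ Multiset.card s) s.prod := by
  induction s using Multiset.induction with
  | empty => simpa using one
  | cons f s ih =>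
    obtain ⟨ihdeg, ihL⟩ := ih (fun g hg => hdeg g (Multiset.mem_cons_of_mem hg))
      (fun g hg => hL g (Multiset.mem_cons_of_mem hg))
    have hfdeg := hdeg f (Multiset.mem_cons_self f s)
    have hfL := hL f (Multiset.mem_cons_self f s)
    have hdeg' : f.totalDegree + s.prod.totalDegree ≤ δ * (Multiset.card s + 1) := by
      rw [mul_add_one]; omega
    rw [Multiset.prod_cons, Multiset.card_cons]
    refine ⟨(totalDegree_mul _ _).trans hdeg', (hfL.mul ihL).mono ?_⟩
    have hL0 := hfL.nonneg
    calc (2 : ℝ) ^ (f.totalDegree + s.prod.totalDegree) *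
          (L * (2 ^ (δ * Multiset.card s) * L) ^ Multiset.card s)
        ≤ 2 ^ (δ * (Multiset.card s + 1)) *
          (L * (2 ^ (δ * (Multiset.card s + 1)) * L) ^ Multiset.card s) := by
          gcongr <;> norm_num
      _ = _ := by ring

protected lemma aeval {ι : Type*} {p : MvPolynomial ι ℝ} {g : ι → MvPolynomial σ ℝ}
    {D δ : ℕ} {K L : ℝ} (hp : p.totalDegree ≤ D) (hpK : CoeffBound K p)
    (hgdeg : ∀ i, (g i).totalDegree ≤ δ) (hgL : ∀ i, CoeffBound L (g i)) (hL : 1 ≤ L) :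
    (aeval g p).totalDegree ≤ δ * D ∧
      CoeffBound (#p.support * (K * (2 ^ (δ * D) * L) ^ D)) (aeval g p) := by
  have hrepr : aeval g p =
      ∑ m ∈ p.support, C (coeff m p) * ((Finsupp.toMultiset m).map g).prod := by
    conv_lhs => rw [p.as_sum]
    refine (map_sum _ _ _).trans (sum_congr rfl fun m _ => ?_)
    rw [aeval_monomial, algebraMap_eq, Finsupp.toMultiset_map, Finsupp.prod_toMultiset,
      Finsupp.prod_mapDomain_index pow_zero pow_add]
  have hterm : ∀ m ∈ p.support,
      (C (coeff m p) * ((Finsupp.toMultiset m).map g).prod).totalDegree ≤ δ * D ∧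
      CoeffBound (K * (2 ^ (δ * D) * L) ^ D)
        (C (coeff m p) * ((Finsupp.toMultiset m).map g).prod) := by
    intro m hm
    have hmD : Multiset.card ((Finsupp.toMultiset m).map g) ≤ D := by
      rw [Multiset.card_map, Finsupp.card_toMultiset]; exact (le_totalDegree hm).trans hp
    obtain ⟨hdeg, hcoeff⟩ := multiset_prod (s := (Finsupp.toMultiset m).map g)
      (by simpa using fun i _ => hgdeg i) (by simpa using fun i _ => hgL i)
    refine ⟨(totalDegree_mul _ _).trans ?_, (hcoeff.C_mul (hpK m)).mono ?_⟩
    · rw [totalDegree_C, zero_add]; exact hdeg.trans (Nat.mul_le_mul_left δ hmD)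
    · have hbase : 1 ≤ (2 : ℝ) ^ (δ * D) * L :=
        one_le_mul_of_one_le_of_one_le (one_le_pow₀ one_le_two) hL
      refine mul_le_mul_of_nonneg_left ((pow_le_pow_left₀ (by positivity) ?_ _).trans
        (pow_le_pow_right₀ hbase hmD)) hpK.nonneg
      gcongr
      norm_num
  rw [hrepr]
  exact ⟨totalDegree_finsetSum_le fun m hm => (hterm m hm).1,
    sum fun m hm => (hterm m hm).2⟩

end CoeffBound

end CoefficientBounds

section ExponentSubalgebra

variable {σ R : Type*} [CommSemiring R]

def exponentSubalgebra (S : AddSubmonoid (σ →₀ ℕ)) : Subalgebra R (MvPolynomial σ R) where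
  carrier := {p | ∀ α ∈ p.support, α ∈ S}
  mul_mem' {p q} hp hq α hα := by
    classical
    obtain ⟨β, hβ, γ, hγ, rfl⟩ := mem_add.1 (support_mul p q hα)
    exact S.add_mem (hp β hβ) (hq γ hγ)
  add_mem' {p q} hp hq α hα := by
    classical
    exact (mem_union.1 (support_add hα)).elim (hp α) (hq α)
  algebraMap_mem' a α hα := by
    classical
    rw [algebraMap_eq, mem_support_iff, coeff_C] at hα
    rw [← (ite_ne_right_iff.1 hα).1]
    exact S.zero_mem

lemma aeval_mem_exponentSubalgebra {ι : Type*} {S : AddSubmonoid (σ →₀ ℕ)}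
    {g : ι → MvPolynomial σ R} (hg : ∀ i, g i ∈ exponentSubalgebra (R := R) S)
    (p : MvPolynomial ι R) : aeval g p ∈ exponentSubalgebra (R := R) S := by
  induction p using MvPolynomial.induction_on with
  | C a => rw [aeval_C]; exact Subalgebra.algebraMap_mem _ a
  | add p q hp hq => rw [map_add]; exact add_mem hp hq
  | mul_X p i hp => rw [map_mul, aeval_X]; exact mul_mem hp (hg i)

end ExponentSubalgebra

section FactorGraph

variable {n : ℕ} {α β γ : Edge n →₀ ℕ} {i k : Fin n}

lemma mem_vertexSet_of_apply_ne_zero {e : Edge n} (he : α e ≠ 0) :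
    e.val.1 ∈ vertexSet α ∧ e.val.2 ∈ vertexSet α :=
  ⟨⟨e, he, Or.inl rfl⟩, ⟨e, he, Or.inr rfl⟩⟩

lemma vertexSet_add : vertexSet (β + γ) = vertexSet β ∪ vertexSet γ := by
  ext k
  simp only [vertexSet, Set.mem_ofPred_eq, Set.mem_union, Finsupp.add_apply, ne_eq,
    Nat.add_eq_zero_iff, not_and_or, or_and_right, exists_or]

lemma graphOf_add : graphOf (β + γ) = graphOf β ⊔ graphOf γ := by
  ext i j
  simp only [graphOf, SimpleGraph.sup_adj, Finsupp.add_apply, ne_eq, Nat.add_eq_zero_iff,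
    not_and_or, exists_or]
  tauto

lemma connectedExp_single (e : Edge n) {m : ℕ} (hm : m ≠ 0) :
    ConnectedExp (Finsupp.single e m) := by
  have hadj : (graphOf (Finsupp.single e m)).Adj e.val.1 e.val.2 :=
    Or.inl ⟨e.property, by simpa using hm⟩
  have hreach : ∀ u ∈ vertexSet (Finsupp.single e m),
      (graphOf (Finsupp.single e m)).Reachable u e.val.1 := by
    rintro u ⟨e', he', rfl | rfl⟩ <;> obtain rfl : e' = e := by
      by_contra h; exact he' (Finsupp.single_eq_of_ne h)
    exacts [.rfl, hadj.symm.reachable]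
  exact fun u hu v hv => (hreach u hu).trans (hreach v hv).symm

lemma ConnectedExp.add (hβ : ConnectedExp β) (hγ : ConnectedExp γ) (hiβ : i ∈ vertexSet β)
    (hiγ : i ∈ vertexSet γ) : ConnectedExp (β + γ) := by
  have hreach : ∀ u ∈ vertexSet (β + γ), (graphOf (β + γ)).Reachable u i := by
    intro u hu
    rw [vertexSet_add] at hu
    rw [graphOf_add]
    exact hu.elim (fun hu => (hβ u hu i hiβ).mono le_sup_left)
      (fun hu => (hγ u hu i hiγ).mono le_sup_right)
  exact fun u hu v hv => (hreach u hu).trans (hreach v hv).symm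

def rootedExponents (i : Fin n) : AddSubmonoid (Edge n →₀ ℕ) where
  carrier := {α | ConnectedExp α ∧ (α = 0 ∨ i ∈ vertexSet α)}
  zero_mem' := ⟨fun u ⟨_, he, _⟩ => absurd rfl he, Or.inl rfl⟩
  add_mem' := by
    rintro β γ ⟨hβ, rfl | hiβ⟩ ⟨hγ, rfl | hiγ⟩
    · simpa using hβ
    · simpa using ⟨hγ, Or.inr hiγ⟩
    · simpa using ⟨hβ, Or.inr hiβ⟩
    · exact ⟨hβ.add hγ hiβ hiγ, Or.inr (vertexSet_add ▸ Or.inl hiβ)⟩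

end FactorGraph

section EntryVariables

variable {n : ℕ}

def Edge.Joins (e : Edge n) (i k : Fin n) : Prop := e.val = (i, k) ∨ e.val = (k, i)

lemma Edge.Joins.mem_vertexSet {e : Edge n} {i k : Fin n} (h : e.Joins i k)
    {α : Edge n →₀ ℕ} (he : α e ≠ 0) : i ∈ vertexSet α ∧ k ∈ vertexSet α := by
  obtain ⟨h₁, h₂⟩ := mem_vertexSet_of_apply_ne_zero he
  rcases h with h | h <;> simp only [h] at h₁ h₂
  exacts [⟨h₁, h₂⟩, ⟨h₂, h₁⟩]

lemma Edge.Joins.unique {e : Edge n} {i k k' : Fin n} (h : e.Joins i k) (h' : e.Joins i k') :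
    k = k' := by
  rcases h with h | h <;> rcases h' with h' | h' <;> rw [h] at h' <;>
    simp only [Prod.mk.injEq] at h' <;> grind

def entryVar (i k : Fin n) : LDP n :=
  if h : i < k then X ⟨(i, k), h⟩ else if h' : k < i then X ⟨(k, i), h'⟩ else 0

lemma entryVar_eq_zero_or_exists (i k : Fin n) :
    entryVar i k = 0 ∨ ∃ e : Edge n, e.Joins i k ∧ entryVar i k = X e := by
  unfold entryVar
  split_ifs with h h'
  exacts [Or.inr ⟨_, Or.inl rfl, rfl⟩, Or.inr ⟨_, Or.inr rfl, rfl⟩, Or.inl rfl]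

lemma evalMat_entryVar {A : Matrix (Fin n) (Fin n) ℝ} (hA : A.IsSymm) (hA₀ : ∀ k, A k k = 0)
    (i k : Fin n) : evalMat (entryVar i k) A = A i k := by
  unfold entryVar evalMat
  split_ifs with h h'
  · rw [eval_X]
  · rw [eval_X]; exact hA.apply i k
  · rw [map_zero, le_antisymm (not_lt.1 h') (not_lt.1 h), hA₀]

def rootedSubalgebra (i : Fin n) : Subalgebra ℝ (LDP n) := exponentSubalgebra (rootedExponents i)

lemma X_mul_mem_rootedSubalgebra {e : Edge n} {i k : Fin n} (he : e.Joins i k) {Q : LDP n}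
    (hQ : Q ∈ rootedSubalgebra k) : X e * Q ∈ rootedSubalgebra i := by
  classical
  have hX : X e ∈ rootedSubalgebra k := by
    intro α hα
    rw [support_X, mem_singleton] at hα
    subst hα
    exact ⟨connectedExp_single e one_ne_zero,
      Or.inr (he.mem_vertexSet (by simp)).2⟩
  intro α hα
  have hαe : α e ≠ 0 := by
    rw [mem_support_iff, coeff_X_mul'] at hα
    exact Finsupp.mem_support_iff.1 (of_not_not fun h => hα (if_neg h))
  exact ⟨(mul_mem hX hQ α hα).1, Or.inr (he.mem_vertexSet hαe).1⟩

lemma entryVar_mul_mem_rootedSubalgebra (i : Fin n) {k : Fin n} {Q : LDP n}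
    (hQ : Q ∈ rootedSubalgebra k) : entryVar i k * Q ∈ rootedSubalgebra i := by
  obtain h | ⟨e, he, h⟩ := entryVar_eq_zero_or_exists i k <;> rw [h]
  · rw [zero_mul]; exact zero_mem _
  · exact X_mul_mem_rootedSubalgebra he hQ

lemma totalDegree_entryVar_mul_le (i k : Fin n) {Q : LDP n} :
    (entryVar i k * Q).totalDegree ≤ Q.totalDegree + 1 := by
  obtain h | ⟨e, -, h⟩ := entryVar_eq_zero_or_exists i k <;> rw [h]
  · simp
  · exact (totalDegree_mul _ _).trans (by rw [totalDegree_X, add_comm])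

lemma CoeffBound.entryVar_mul (i k : Fin n) {Q : LDP n} {c : ℝ} (hQ : CoeffBound c Q) :
    CoeffBound c (entryVar i k * Q) := by
  classical
  intro α
  obtain h | ⟨e, -, h⟩ := entryVar_eq_zero_or_exists i k <;> rw [h]
  · simpa using hQ.nonneg
  · rw [coeff_X_mul']
    split_ifs
    exacts [hQ _, by simpa using hQ.nonneg]

lemma exists_joins_of_coeff_entryVar_mul_ne_zero {i k : Fin n} {Q : LDP n}
    {α : Edge n →₀ ℕ} (hα : coeff α (entryVar i k * Q) ≠ 0) :
    ∃ e ∈ α.support, e.Joins i k := by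
  classical
  obtain h | ⟨e, he, h⟩ := entryVar_eq_zero_or_exists i k <;> rw [h] at hα
  · simp at hα
  · rw [coeff_X_mul'] at hα
    exact ⟨e, of_not_not fun h => hα (if_neg h), he⟩

lemma CoeffBound.sum_entryVar_mul (i : Fin n) {Q : Fin n → LDP n} {d : ℕ} {c : ℝ}
    (hdeg : ∀ k, (Q k).totalDegree ≤ d) (hQ : ∀ k, CoeffBound c (Q k)) :
    CoeffBound ((d + 1) * c) (∑ k, entryVar i k * Q k) := by
  classical
  intro α
  set S := univ.filter fun k => coeff α (entryVar i k * Q k) ≠ 0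
  have hS : #S ≤ d + 1 := by
    obtain hS | ⟨k, hk⟩ := S.eq_empty_or_nonempty
    · simp [hS]
    calc #S ≤ #α.support := card_le_card_of_forall_subsingleton (fun k e => e.Joins i k)
          (fun k hk => exists_joins_of_coeff_entryVar_mul_ne_zero (mem_filter.1 hk).2)
          (fun e _ k₁ hk₁ k₂ hk₂ => hk₁.2.unique hk₂.2)
      _ ≤ α.degree := by
          simpa [Finsupp.degree_apply] using card_nsmul_le_sum α.support α 1
            fun e he => Nat.one_le_iff_ne_zero.2 (Finsupp.mem_support_iff.1 he)
      _ ≤ d + 1 := (le_totalDegree (mem_support_iff.2 (mem_filter.1 hk).2)).trans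
          ((totalDegree_entryVar_mul_le i k).trans (Nat.add_le_add_right (hdeg k) 1))
  have hcoeff :
      coeff α (∑ k, entryVar i k * Q k) = coeff α (∑ k ∈ S, entryVar i k * Q k) := by
    rw [coeff_sum, coeff_sum, sum_filter_ne_zero]
  rw [hcoeff]
  exact (CoeffBound.sum fun k _ => (hQ k).entryVar_mul i k).mono
    (by gcongr; exacts [(hQ i).nonneg, by exact_mod_cast hS]) α

end EntryVariables

section AMP

variable {n : ℕ} (u0 : Fin n → ℝ) (q : ∀ t : ℕ, MvPolynomial (Fin (t + 1)) ℝ)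
  (b : ℕ → ℕ → ℝ)

def ampLDP : ℕ → Fin n → LDP n
  | 0, i => C (u0 i)
  | t + 1, i =>
      ∑ k, entryVar i k * aeval (fun s : Fin (t + 1) => ampLDP s k) (q t) -
      ∑ j ∈ (Icc 1 t).attach,
        C (b t j) * aeval (fun s : Fin (j.1 - 1 + 1) => ampLDP s i) (q (j.1 - 1))
termination_by t => t
decreasing_by
  · exact s.isLt
  · have := (mem_Icc.1 j.2).2; have := s.isLt; omega

lemma ampLDP_zero (i : Fin n) : ampLDP u0 q b 0 i = C (u0 i) := by rw [ampLDP]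

lemma ampLDP_succ (t : ℕ) (i : Fin n) :
    ampLDP u0 q b (t + 1) i =
      ∑ k, entryVar i k * aeval (fun s : Fin (t + 1) => ampLDP u0 q b s k) (q t) -
      ∑ j ∈ (Icc 1 t).attach,
        C (b t j) * aeval (fun s : Fin (j.1 - 1 + 1) => ampLDP u0 q b s i) (q (j.1 - 1)) := by
  rw [ampLDP]

lemma ampLDP_mem_rootedSubalgebra (t : ℕ) (i : Fin n) :
    ampLDP u0 q b t i ∈ rootedSubalgebra i := by
  induction t using Nat.strong_induction_on generalizing i with
  | _ t ih =>
    cases t with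
    | zero => rw [ampLDP_zero]; exact Subalgebra.algebraMap_mem _ _
    | succ t =>
      rw [ampLDP_succ]
      refine sub_mem (sum_mem fun k _ => entryVar_mul_mem_rootedSubalgebra i ?_)
        (sum_mem fun j _ => mul_mem (Subalgebra.algebraMap_mem _ _) ?_)
      · exact aeval_mem_exponentSubalgebra (fun s : Fin (t + 1) => ih s s.isLt k) _
      · refine aeval_mem_exponentSubalgebra (fun s : Fin (j.1 - 1 + 1) => ih s ?_ i) _
        have := (mem_Icc.1 j.2).2; have := s.isLt; omega

section Evaluation

variable {A : Matrix (Fin n) (Fin n) ℝ}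

lemma evalMat_sub (p p' : LDP n) : evalMat (p - p') A = evalMat p A - evalMat p' A := map_sub _ _ _

lemma evalMat_mul (p p' : LDP n) : evalMat (p * p') A = evalMat p A * evalMat p' A :=
  map_mul _ _ _

lemma evalMat_sum {ι : Type*} (s : Finset ι) (f : ι → LDP n) :
    evalMat (∑ i ∈ s, f i) A = ∑ i ∈ s, evalMat (f i) A := map_sum _ _ _

lemma evalMat_C (a : ℝ) : evalMat (C a : LDP n) A = a := eval_C _

lemma evalMat_aeval {r : ℕ} (g : Fin r → LDP n) (p : MvPolynomial (Fin r) ℝ) :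
    evalMat (aeval g p) A = eval (fun j => evalMat (g j) A) p := by
  simp only [evalMat, ← coe_aeval_eq_eval]
  exact DFunLike.congr_fun (comp_aeval g _) p

def IsAMPIterate (A : Matrix (Fin n) (Fin n) ℝ) (T : ℕ) (u : ℕ → Fin n → ℝ) : Prop :=
  ∀ s : ℕ, s + 1 ≤ T →
    u (s + 1) = fun i' : Fin n =>
      A.mulVec (fun k : Fin n => eval (fun idx : Fin (s + 1) => u (idx : ℕ) k) (q s)) i' -
        ∑ j ∈ Icc 1 s, b s j * eval (fun idx : Fin (j - 1 + 1) => u (idx : ℕ) i') (q (j - 1))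

lemma IsAMPIterate.apply_eq_evalMat_ampLDP (hA : A.IsSymm) (hA₀ : ∀ k, A k k = 0) {T : ℕ}
    {u : ℕ → Fin n → ℝ} (hu : IsAMPIterate q b A T u) (hu0 : u 0 = u0) :
    ∀ t ≤ T, ∀ i, u t i = evalMat (ampLDP u0 q b t i) A := by
  intro t
  induction t using Nat.strong_induction_on with
  | _ t ih =>
    cases t with
    | zero => intro _ i; rw [hu0, ampLDP_zero, evalMat_C]
    | succ t =>
      intro ht i
      have hprev : ∀ s ≤ t, ∀ k, u s k = evalMat (ampLDP u0 q b s k) A :=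
        fun s hs k => ih s (by omega) (by omega) k
      rw [hu t ht, ampLDP_succ, evalMat_sub, evalMat_sum, evalMat_sum]
      simp only [Matrix.mulVec, dotProduct]
      rw [← sum_attach (Icc 1 t)]
      refine congrArg₂ (· - ·) (sum_congr rfl fun k _ => ?_) (sum_congr rfl fun j _ => ?_)
      · rw [evalMat_mul, evalMat_entryVar hA hA₀, evalMat_aeval]
        congr 3
        funext s
        exact hprev s (Nat.le_of_lt_succ s.isLt) k
      · rw [evalMat_mul, evalMat_C, evalMat_aeval]
        congr 3
        funext s
        have := (mem_Icc.1 j.2).2; have := s.isLt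
        exact hprev s (by omega) i

end Evaluation

lemma ampLDP_succ_bounds {T D : ℕ} {K B : ℝ} (hqdeg : ∀ t, t < T → (q t).totalDegree ≤ D)
    (hqcoeff : ∀ t, t < T → CoeffBound K (q t))
    (hb : ∀ t j : ℕ, 1 ≤ j → j ≤ t → t ≤ T - 1 → |b t j| ≤ B)
    {t Δ : ℕ} {c : ℝ} (ht : t < T) (hc : 1 ≤ c)
    (hprev : ∀ s ≤ t, ∀ k,
      (ampLDP u0 q b s k).totalDegree ≤ Δ ∧ CoeffBound c (ampLDP u0 q b s k))
    (i : Fin n) :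
    (ampLDP u0 q b (t + 1) i).totalDegree ≤ Δ * D + 1 ∧
      CoeffBound ((Δ * D + 1 + t * B) * ((D + 1) ^ T * (K * (2 ^ (Δ * D) * c) ^ D)))
        (ampLDP u0 q b (t + 1) i) := by
  set Q : ℝ := (D + 1) ^ T * (K * (2 ^ (Δ * D) * c) ^ D)
  have haeval : ∀ r ≤ t, ∀ k,
      (aeval (fun s : Fin (r + 1) => ampLDP u0 q b s k) (q r)).totalDegree ≤ Δ * D ∧
        CoeffBound Q (aeval (fun s : Fin (r + 1) => ampLDP u0 q b s k) (q r)) := by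
    intro r hr k
    have hrT : r < T := by omega
    obtain ⟨hdeg, hbound⟩ := CoeffBound.aeval (hqdeg r hrT) (hqcoeff r hrT)
      (fun s => (hprev s (by omega) k).1) (fun s => (hprev s (by omega) k).2) hc
    refine ⟨hdeg, hbound.mono ?_⟩
    have hK := (hqcoeff r hrT).nonneg
    have hcard : (#(q r).support : ℝ) ≤ (D + 1) ^ T := by
      have := (card_support_le_of_totalDegree_le (hqdeg r hrT)).trans
        (Nat.pow_le_pow_right D.succ_pos (by simpa using hrT : Fintype.card (Fin (r + 1)) ≤ T))
      exact_mod_cast this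
    exact mul_le_mul_of_nonneg_right hcard (by positivity)
  have hsum := CoeffBound.sum_entryVar_mul i (fun k => (haeval t le_rfl k).1)
    (fun k => (haeval t le_rfl k).2)
  have honsager : ∀ j ∈ (Icc 1 t).attach,
      (C (b t j) * aeval (fun s : Fin (j.1 - 1 + 1) => ampLDP u0 q b s i) (q (j.1 - 1))).totalDegree
        ≤ Δ * D + 1 ∧ CoeffBound (B * Q)
        (C (b t j) * aeval (fun s : Fin (j.1 - 1 + 1) => ampLDP u0 q b s i) (q (j.1 - 1))) := by
    intro j _
    have hj := mem_Icc.1 j.2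
    obtain ⟨hdeg, hbound⟩ := haeval (j.1 - 1) (by omega) i
    refine ⟨(totalDegree_mul _ _).trans ?_, hbound.C_mul (hb t j hj.1 hj.2 (by omega))⟩
    rw [totalDegree_C]
    omega
  rw [ampLDP_succ]
  refine ⟨(totalDegree_sub _ _).trans (max_le ?_ ?_), (hsum.sub (CoeffBound.sum fun j hj =>
    (honsager j hj).2)).mono (le_of_eq ?_)⟩
  · exact totalDegree_finsetSum_le fun k _ =>
      (totalDegree_entryVar_mul_le i k).trans (Nat.add_le_add_right (haeval t le_rfl k).1 1)
  · exact totalDegree_finsetSum_le fun j hj => (honsager j hj).1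
  · rw [card_attach, Nat.card_Icc, Nat.add_sub_cancel]
    push_cast
    ring

end AMP

lemma exists_ampLDP_bounds {T D : ℕ} {K B : ℝ} {q : ∀ t : ℕ, MvPolynomial (Fin (t + 1)) ℝ}
    {b : ℕ → ℕ → ℝ} (hqdeg : ∀ t, t < T → (q t).totalDegree ≤ D)
    (hqcoeff : ∀ t, t < T → CoeffBound K (q t))
    (hb : ∀ t j : ℕ, 1 ≤ j → j ≤ t → t ≤ T - 1 → |b t j| ≤ B) (M : ℝ) :
    ∀ t ≤ T, ∃ (Δ : ℕ) (c : ℝ), 1 ≤ c ∧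
      ∀ (n : ℕ) (u0 : Fin n → ℝ), (∀ i, |u0 i| ≤ M) → ∀ s ≤ t, ∀ k,
        (ampLDP u0 q b s k).totalDegree ≤ Δ ∧ CoeffBound c (ampLDP u0 q b s k) := by
  intro t
  induction t with
  | zero =>
    refine fun _ => ⟨0, max 1 M, le_max_left _ _, fun n u0 hu0 s hs k => ?_⟩
    obtain rfl : s = 0 := by omega
    rw [ampLDP_zero, totalDegree_C]
    exact ⟨le_rfl, (CoeffBound.C _).mono ((hu0 k).trans (le_max_right _ _))⟩
  | succ t ih =>
    intro ht
    obtain ⟨Δ, c, hc, hbounds⟩ := ih (by omega)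
    refine ⟨max Δ (Δ * D + 1), max c ((Δ * D + 1 + t * B) *
      ((D + 1) ^ T * (K * (2 ^ (Δ * D) * c) ^ D))), hc.trans (le_max_left _ _),
      fun n u0 hu0 s hs k => ?_⟩
    obtain hs | rfl : s ≤ t ∨ s = t + 1 := by omega
    · obtain ⟨hdeg, hbound⟩ := hbounds n u0 hu0 s hs k
      exact ⟨hdeg.trans (le_max_left _ _), hbound.mono (le_max_left _ _)⟩
    · obtain ⟨hdeg, hbound⟩ := ampLDP_succ_bounds u0 q b hqdeg hqcoeff hb (by omega) hc
        (hbounds n u0 hu0) k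
      exact ⟨hdeg.trans (le_max_right _ _), hbound.mono (le_max_right _ _)⟩

end

theorem stmt_18_general (T D : ℕ) (K B M : ℝ)
    (q : ∀ t : ℕ, MvPolynomial (Fin (t + 1)) ℝ)
    (hqdeg : ∀ t, t < T → (q t).totalDegree ≤ D)
    (hqcoeff : ∀ t, t < T → ∀ α : Fin (t + 1) →₀ ℕ, |MvPolynomial.coeff α (q t)| ≤ K)
    (b : ℕ → ℕ → ℝ)
    (hb : ∀ t j : ℕ, 1 ≤ j → j ≤ t → t ≤ T - 1 → |b t j| ≤ B) :
    ∃ (Δ : ℕ) (c : ℝ), ∀ n : ℕ, ∀ u0 : Fin n → ℝ, (∀ i, |u0 i| ≤ M) →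
      ∀ t : ℕ, t ≤ T → ∀ i : Fin n, ∃ w : LDP n,
        w.totalDegree ≤ Δ ∧ LDPnorm w ≤ c ∧
        (∀ α : Edge n →₀ ℕ, MvPolynomial.coeff α w ≠ 0 →
          ConnectedExp α ∧ (α = 0 ∨ i ∈ vertexSet α)) ∧
        (∀ X : Matrix (Fin n) (Fin n) ℝ, X.IsSymm → (∀ k, X k k = 0) →
          ∀ u : ℕ → Fin n → ℝ, u 0 = u0 →
            (∀ s : ℕ, s + 1 ≤ T →
              u (s + 1) = fun i' : Fin n =>
                X.mulVec
                    (fun k : Fin n =>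
                      MvPolynomial.eval (fun idx : Fin (s + 1) => u (idx : ℕ) k) (q s)) i' -
                  ∑ j ∈ Finset.Icc 1 s, b s j *
                    MvPolynomial.eval (fun idx : Fin (j - 1 + 1) => u (idx : ℕ) i')
                      (q (j - 1))) →
            u t i = evalMat w X) := by
  obtain ⟨Δ, c, -, hbounds⟩ := exists_ampLDP_bounds hqdeg hqcoeff hb M T le_rfl
  refine ⟨Δ, c, fun n u0 hu0 t ht i => ⟨ampLDP u0 q b t i, ?_, ?_, ?_, ?_⟩⟩
  · exact (hbounds n u0 hu0 t ht i).1
  · exact (hbounds n u0 hu0 t ht i).2.LDPnorm_le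
  · exact fun α hα =>
      ampLDP_mem_rootedSubalgebra u0 q b t i α (MvPolynomial.mem_support_iff.2 hα)
  · exact fun X hX hX₀ u hu0' hu =>
      IsAMPIterate.apply_eq_evalMat_ampLDP u0 q b hX hX₀ hu hu0' t ht i

/-- AMP iterations with polynomial denoisers and deterministic Onsager terms are
computed by connected LDPs containing the corresponding node, with `n`-independent
degree and coefficient bounds. -/
theorem stmt_18 (T D : ℕ) (K B M : ℝ) (hK : 0 < K) (hB : 0 < B) (hM : 0 < M)
    (q : ∀ t : ℕ, MvPolynomial (Fin (t + 1)) ℝ)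
    (hqdeg : ∀ t, t < T → (q t).totalDegree ≤ D)
    (hqcoeff : ∀ t, t < T → ∀ α : Fin (t + 1) →₀ ℕ, |MvPolynomial.coeff α (q t)| ≤ K)
    (b : ℕ → ℕ → ℝ)
    (hb : ∀ t j : ℕ, 1 ≤ j → j ≤ t → t ≤ T - 1 → |b t j| ≤ B) :
    ∃ (Δ : ℕ) (c : ℝ), ∀ n : ℕ, ∀ u0 : Fin n → ℝ, (∀ i, |u0 i| ≤ M) →
      ∀ t : ℕ, t ≤ T → ∀ i : Fin n, ∃ w : LDP n,
        w.totalDegree ≤ Δ ∧ LDPnorm w ≤ c ∧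
        (∀ α : Edge n →₀ ℕ, MvPolynomial.coeff α w ≠ 0 →
          ConnectedExp α ∧ (α = 0 ∨ i ∈ vertexSet α)) ∧
        (∀ X : Matrix (Fin n) (Fin n) ℝ, X.IsSymm → (∀ k, X k k = 0) →
          ∀ u : ℕ → Fin n → ℝ, u 0 = u0 →
            (∀ s : ℕ, s + 1 ≤ T →
              u (s + 1) = fun i' : Fin n =>
                X.mulVec
                    (fun k : Fin n =>
                      MvPolynomial.eval (fun idx : Fin (s + 1) => u (idx : ℕ) k) (q s)) i' -
                  ∑ j ∈ Finset.Icc 1 s, b s j *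
                    MvPolynomial.eval (fun idx : Fin (j - 1 + 1) => u (idx : ℕ) i')
                      (q (j - 1))) →
            u t i = evalMat w X) :=
  stmt_18_general T D K B M q hqdeg hqcoeff b hb
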